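/- arXiv:1806.05359 — 8 statements merged into one kernel-verified Lean document; each statement's English description precedes it below -/
import Mathlib

section
/- Under the PRP mediator and exposure-targeted utility, along a finite improvement path γ, if at step r author p deviates to topic k and her quality Q_{p,k} is at most B_k(a^r) (the highest quality on topic k before the deviation), then her utility after the deviation is at most D(k)/(W_k(γ)+1), where W_k(γ) is the minimum of H_k over all profiles in γ. -/
open Finset

noncomputable section

/-- Highest quality of a document on topic `k` under profile `a`:
`B_k(a) = max_j Q_{j,k} · 1[a_j = k]` (with value `0` when the max is over an empty set). -/
def hiQ {n m : ℕ} (Q : Fin n → Fin m → ℝ) (k : Fin m) (a : Fin n → Fin m) : ℝ :=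
  Finset.univ.fold max 0 (fun j => if a j = k then Q j k else 0)

/-- Number of authors writing on topic `k` with the highest quality `B_k(a)`. -/
def numTop {n m : ℕ} (Q : Fin n → Fin m → ℝ) (k : Fin m) (a : Fin n → Fin m) : ℕ :=
  (Finset.univ.filter (fun j => a j = k ∧ Q j k = hiQ Q k a)).card

/-- The PRP mediator: first-rank probability of author `j` on topic `k` under profile `a`. -/
def prp {n m : ℕ} (Q : Fin n → Fin m → ℝ) (k : Fin m) (a : Fin n → Fin m) (j : Fin n) : ℝ :=
  if a j = k ∧ Q j k = hiQ Q k a then 1 / (numTop Q k a : ℝ) else 0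

/-- Exposure-targeted utility under the PRP mediator. -/
def uEx {n m : ℕ} (D : Fin m → ℝ) (Q : Fin n → Fin m → ℝ) (a : Fin n → Fin m) (j : Fin n) : ℝ :=
  D (a j) * prp Q (a j) a j

/-- Action-targeted utility under the PRP mediator. -/
def uAc {n m : ℕ} (D : Fin m → ℝ) (Q : Fin n → Fin m → ℝ) (a : Fin n → Fin m) (j : Fin n) : ℝ :=
  D (a j) * prp Q (a j) a j * Q j (a j)

/-- `b` is obtained from `a` by a unilateral deviation of author `p` strictly
increasing her utility (an improvement step). -/
def ImpStep {n m : ℕ} (u : (Fin n → Fin m) → Fin n → ℝ)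
    (a b : Fin n → Fin m) (p : Fin n) : Prop :=
  (∀ i, i ≠ p → b i = a i) ∧ b p ≠ a p ∧ u a p < u b p

/-- `γ` is an improvement path: each consecutive pair of profiles is an improvement step. -/
def IsImpPath {n m l : ℕ} (u : (Fin n → Fin m) → Fin n → ℝ)
    (γ : Fin (l + 1) → Fin n → Fin m) : Prop :=
  ∀ r : Fin l, ∃ p, ImpStep u (γ r.castSucc) (γ r.succ) p

/-- `W_k(γ)`: the minimum of `H_k` over all profiles in the finite path `γ`. -/
def minTop {n m l : ℕ} (Q : Fin n → Fin m → ℝ) (k : Fin m)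
    (γ : Fin (l + 1) → Fin n → Fin m) : ℕ :=
  Finset.univ.inf' Finset.univ_nonempty (fun r => numTop Q k (γ r))

/-- `S_k(γ)`: the maximum of `B_k` over all profiles in the finite path `γ`. -/
def maxQ {n m l : ℕ} (Q : Fin n → Fin m → ℝ) (k : Fin m)
    (γ : Fin (l + 1) → Fin n → Fin m) : ℝ :=
  Finset.univ.sup' Finset.univ_nonempty (fun r => hiQ Q k (γ r))


lemma hiQ_nonneg {n m : ℕ} (Q : Fin n → Fin m → ℝ) (k : Fin m) (a : Fin n → Fin m) :
    0 ≤ hiQ Q k a :=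
  (Finset.le_fold_max _).2 (Or.inl le_rfl)

lemma le_hiQ {n m : ℕ} (Q : Fin n → Fin m → ℝ) (k : Fin m) (a : Fin n → Fin m)
    (j : Fin n) : (if a j = k then Q j k else 0) ≤ hiQ Q k a :=
  (Finset.le_fold_max _).2 (Or.inr ⟨j, Finset.mem_univ j, le_rfl⟩)

lemma hiQ_le {n m : ℕ} {Q : Fin n → Fin m → ℝ} {k : Fin m} {a : Fin n → Fin m}
    {c : ℝ} (h0 : 0 ≤ c) (h : ∀ j, a j = k → Q j k ≤ c) : hiQ Q k a ≤ c :=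
  (Finset.fold_max_le _).2 ⟨h0, fun j _ => by by_cases hj : a j = k <;> simp [hj, h0, h j]⟩

/-- Along a finite improvement path `γ` under PRP/exposure-targeted utility, if at step
`r` author `p` deviates to topic `k` and `Q_{p,k} ≤ B_k(a^r)`, then her utility after
the deviation is at most `D(k)/(W_k(γ)+1)`. -/
theorem stmt1 {n m l : ℕ} (D : Fin m → ℝ) (Q : Fin n → Fin m → ℝ)
    (hD : ∀ k, 0 ≤ D k) (hDsum : ∑ k, D k = 1)
    (hQ : ∀ j k, Q j k ∈ Set.Icc (0:ℝ) 1)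
    (γ : Fin (l + 1) → Fin n → Fin m) (hγ : IsImpPath (uEx D Q) γ)
    (r : Fin l) (p : Fin n) (k : Fin m)
    (hstep : ImpStep (uEx D Q) (γ r.castSucc) (γ r.succ) p)
    (hk : γ r.succ p = k) (hq : Q p k ≤ hiQ Q k (γ r.castSucc)) :
    uEx D Q (γ r.succ) p ≤ D k / (minTop Q k γ + 1) := by
  set a := γ r.castSucc with ha
  set b := γ r.succ with hb
  obtain ⟨hne, hbp, _⟩ := hstep
  have hap : a p ≠ k := by rw [← hk]; exact fun h => hbp h.symm
  have hBab : hiQ Q k a ≤ hiQ Q k b := by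
    apply hiQ_le (hiQ_nonneg Q k b)
    intro j hj
    have hjp : j ≠ p := fun h => hap (h ▸ hj)
    have := le_hiQ Q k b j
    rwa [hne j hjp, if_pos hj] at this
  have hBba : hiQ Q k b ≤ hiQ Q k a := by
    apply hiQ_le (hiQ_nonneg Q k a)
    intro j hj
    by_cases hjp : j = p
    · exact hjp ▸ hq
    · have := le_hiQ Q k a j
      rwa [← hne j hjp, if_pos hj] at this
  have hBab' : hiQ Q k b = hiQ Q k a := le_antisymm hBba hBab
  by_cases htop : Q p k = hiQ Q k b
  · -- p is top at b; numTop b = numTop a + 1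
    have hset : Finset.univ.filter (fun j => b j = k ∧ Q j k = hiQ Q k b)
        = insert p (Finset.univ.filter (fun j => a j = k ∧ Q j k = hiQ Q k a)) := by
      ext j
      simp only [Finset.mem_insert, Finset.mem_filter, Finset.mem_univ, true_and]
      constructor
      · rintro ⟨h1, h2⟩
        by_cases hjp : j = p
        · exact Or.inl hjp
        · exact Or.inr ⟨(hne j hjp) ▸ h1, hBab' ▸ h2⟩
      · rintro (hjp | ⟨h1, h2⟩)
        · exact ⟨hjp ▸ hk, hjp ▸ htop⟩
        · have hjp : j ≠ p := fun h => hap (h ▸ h1)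
          exact ⟨(hne j hjp).symm ▸ h1, hBab' ▸ h2⟩
    have hpnot : p ∉ Finset.univ.filter (fun j => a j = k ∧ Q j k = hiQ Q k a) := by
      simp [hap]
    have hcard : numTop Q k b = numTop Q k a + 1 := by
      unfold numTop
      rw [hset, Finset.card_insert_of_notMem hpnot]
    have hW : minTop Q k γ ≤ numTop Q k a :=
      Finset.inf'_le _ (Finset.mem_univ r.castSucc)
    have hWb : (minTop Q k γ : ℝ) + 1 ≤ (numTop Q k b : ℝ) := by
      rw [hcard]; push_cast; have := (Nat.cast_le (α := ℝ)).2 hW; linarith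
    have hpos : (0:ℝ) < (minTop Q k γ : ℝ) + 1 := by positivity
    have hprp : prp Q (b p) b p = 1 / (numTop Q k b : ℝ) := by
      rw [hk]; exact if_pos ⟨hk, htop⟩
    rw [show uEx D Q b p = D (b p) * prp Q (b p) b p from rfl, hprp, hk,
      div_eq_mul_one_div (D k)]
    apply mul_le_mul_of_nonneg_left _ (hD k)
    exact one_div_le_one_div_of_le hpos hWb
  · have hprp : prp Q (b p) b p = 0 := by
      rw [hk]; exact if_neg (fun h => htop h.2)
    rw [show uEx D Q b p = D (b p) * prp Q (b p) b p from rfl, hprp, mul_zero]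
    exact div_nonneg (hD k) (by positivity)
end
end

section
/- Under the PRP mediator, every better-response (improvement) path in an authors game with exposure-targeted utility is finite; equivalently, the game has no improvement cycles, so any better-response dynamics converges to a pure Nash equilibrium. -/
open Finset

noncomputable section

namespace AuxPRP


variable {n m : ℕ} (Q : Fin n → Fin m → ℝ)

lemma fold_max_nonneg (s : Finset (Fin n)) (f : Fin n → ℝ) : 0 ≤ s.fold max 0 f :=
  (Finset.le_fold_max 0).2 (Or.inl le_rfl)

lemma le_hiQ (k : Fin m) (a : Fin n → Fin m) (j : Fin n) :
    (if a j = k then Q j k else 0) ≤ hiQ Q k a :=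
  (Finset.le_fold_max _).2 (Or.inr ⟨j, Finset.mem_univ j, le_rfl⟩)

lemma hiQ_erase (k : Fin m) (a : Fin n → Fin m) (p : Fin n) :
    hiQ Q k a = max (if a p = k then Q p k else 0)
      ((Finset.univ.erase p).fold max 0 (fun j => if a j = k then Q j k else 0)) := by
  conv_lhs => rw [hiQ, ← Finset.insert_erase (Finset.mem_univ p)]
  rw [Finset.fold_insert (Finset.notMem_erase p Finset.univ)]

lemma erase_fold_congr (k : Fin m) (p : Fin n) {a b : Fin n → Fin m}
    (h : ∀ j, j ≠ p → b j = a j) :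
    (Finset.univ.erase p).fold max 0 (fun j => if b j = k then Q j k else 0)
      = (Finset.univ.erase p).fold max 0 (fun j => if a j = k then Q j k else 0) :=
  Finset.fold_congr fun j hj => by rw [h j (Finset.ne_of_mem_erase hj)]

lemma hiQ_join (k : Fin m) (p : Fin n) {a b : Fin n → Fin m}
    (hmove : ∀ j, j ≠ p → b j = a j) (ha : a p ≠ k) (hb : b p = k) :
    hiQ Q k b = max (Q p k) (hiQ Q k a) := by
  rw [hiQ_erase Q k b p, hiQ_erase Q k a p, if_pos hb, if_neg ha,
    erase_fold_congr Q k p hmove, max_eq_right (fold_max_nonneg _ _)]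

lemma hiQ_off (k : Fin m) (p : Fin n) {a b : Fin n → Fin m}
    (hmove : ∀ j, j ≠ p → b j = a j) (ha : a p ≠ k) (hb : b p ≠ k) :
    hiQ Q k b = hiQ Q k a := by
  rw [hiQ_erase Q k b p, hiQ_erase Q k a p, if_neg ha, if_neg hb,
    erase_fold_congr Q k p hmove]

lemma numTop_off (k : Fin m) (p : Fin n) {a b : Fin n → Fin m}
    (hmove : ∀ j, j ≠ p → b j = a j) (ha : a p ≠ k) (hb : b p ≠ k) :
    numTop Q k b = numTop Q k a := by
  unfold numTop
  rw [hiQ_off Q k p hmove ha hb]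
  congr 1
  apply Finset.ext
  intro j
  simp only [Finset.mem_filter, Finset.mem_univ, true_and]
  by_cases hj : j = p
  · subst hj
    constructor
    · rintro ⟨h, -⟩; exact absurd h hb
    · rintro ⟨h, -⟩; exact absurd h ha
  · rw [hmove j hj]

lemma numTop_join_tie (k : Fin m) (p : Fin n) {a b : Fin n → Fin m}
    (hmove : ∀ j, j ≠ p → b j = a j) (ha : a p ≠ k) (hb : b p = k)
    (ht : Q p k = hiQ Q k a) :
    numTop Q k b = numTop Q k a + 1 ∧ hiQ Q k b = hiQ Q k a := by
  have hB : hiQ Q k b = hiQ Q k a := by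
    rw [hiQ_join Q k p hmove ha hb, ht, max_self]
  refine ⟨?_, hB⟩
  unfold numTop
  rw [hB]
  have hset : (Finset.univ.filter (fun j => b j = k ∧ Q j k = hiQ Q k a))
      = insert p (Finset.univ.filter (fun j => a j = k ∧ Q j k = hiQ Q k a)) := by
    apply Finset.ext
    intro j
    simp only [Finset.mem_filter, Finset.mem_univ, true_and, Finset.mem_insert]
    by_cases hj : j = p
    · subst hj; simp [hb, ht]
    · rw [hmove j hj]
      constructor
      · exact fun h => Or.inr h
      · rintro (h | h)
        · exact absurd h hj
        · exact h
  rw [hset, Finset.card_insert_of_notMem]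
  simp only [Finset.mem_filter, Finset.mem_univ, true_and, not_and]
  exact fun h => absurd h ha

lemma numTop_join_beat (k : Fin m) (p : Fin n) {a b : Fin n → Fin m}
    (hmove : ∀ j, j ≠ p → b j = a j) (ha : a p ≠ k) (hb : b p = k)
    (hgt : hiQ Q k a < Q p k) :
    numTop Q k b = 1 ∧ hiQ Q k b = Q p k := by
  have hB : hiQ Q k b = Q p k := by
    rw [hiQ_join Q k p hmove ha hb, max_eq_left hgt.le]
  refine ⟨?_, hB⟩
  unfold numTop
  rw [hB]
  have hset : (Finset.univ.filter (fun j => b j = k ∧ Q j k = Q p k)) = {p} := by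
    apply Finset.ext
    intro j
    simp only [Finset.mem_filter, Finset.mem_univ, true_and, Finset.mem_singleton]
    by_cases hj : j = p
    · subst hj; simp [hb]
    · rw [hmove j hj]
      constructor
      · rintro ⟨h1, h2⟩
        exfalso
        have := le_hiQ Q k a j
        rw [if_pos h1, h2] at this
        exact absurd this (not_le.2 hgt)
      · intro h; exact absurd h hj
  rw [hset, Finset.card_singleton]

lemma leave_loser (k : Fin m) (p : Fin n) {a b : Fin n → Fin m}
    (hmove : ∀ j, j ≠ p → b j = a j) (ha : a p = k) (hb : b p ≠ k)
    (hw : Q p k ≠ hiQ Q k a) :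
    hiQ Q k b = hiQ Q k a ∧ numTop Q k b = numTop Q k a := by
  have hlt : Q p k < hiQ Q k a := by
    have := le_hiQ Q k a p
    rw [if_pos ha] at this
    exact lt_of_le_of_ne this hw
  have hE : hiQ Q k a
      = (Finset.univ.erase p).fold max 0 (fun j => if a j = k then Q j k else 0) := by
    have h1 := hiQ_erase Q k a p
    rw [if_pos ha] at h1
    rcases max_choice (Q p k) ((Finset.univ.erase p).fold max 0
      (fun j => if a j = k then Q j k else 0)) with h | h
    · exfalso; rw [h1, h] at hlt; exact lt_irrefl _ hlt
    · rw [h1, h]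
  have hB : hiQ Q k b = hiQ Q k a := by
    rw [hiQ_erase Q k b p, if_neg hb, max_eq_right (fold_max_nonneg _ _),
      erase_fold_congr Q k p hmove, ← hE]
  refine ⟨hB, ?_⟩
  unfold numTop
  rw [hB]
  congr 1
  apply Finset.ext
  intro j
  simp only [Finset.mem_filter, Finset.mem_univ, true_and]
  by_cases hj : j = p
  · subst hj
    constructor
    · rintro ⟨h, -⟩; exact absurd h hb
    · rintro ⟨-, h⟩; exact absurd h hw
  · rw [hmove j hj]

lemma leave_winner (k : Fin m) (p : Fin n) {a b : Fin n → Fin m}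
    (hmove : ∀ j, j ≠ p → b j = a j) (ha : a p = k) (hb : b p ≠ k)
    (hw : Q p k = hiQ Q k a) (h2 : 2 ≤ numTop Q k a) :
    hiQ Q k b = hiQ Q k a ∧ numTop Q k b = numTop Q k a - 1 := by
  have h2' : 1 < (Finset.univ.filter (fun j => a j = k ∧ Q j k = hiQ Q k a)).card := by
    unfold numTop at h2; omega
  obtain ⟨q, hqmem, hqp⟩ := Finset.exists_mem_ne h2' p
  simp only [Finset.mem_filter, Finset.mem_univ, true_and] at hqmem
  have hE : hiQ Q k a
      = (Finset.univ.erase p).fold max 0 (fun j => if a j = k then Q j k else 0) := by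
    apply le_antisymm
    · refine (Finset.le_fold_max _).2 (Or.inr ⟨q, Finset.mem_erase.2 ⟨hqp, Finset.mem_univ q⟩, ?_⟩)
      rw [if_pos hqmem.1, hqmem.2]
    · have h1 := hiQ_erase Q k a p
      exact h1.ge.trans' (le_max_right _ _)
  have hB : hiQ Q k b = hiQ Q k a := by
    rw [hiQ_erase Q k b p, if_neg hb, max_eq_right (fold_max_nonneg _ _),
      erase_fold_congr Q k p hmove, ← hE]
  refine ⟨hB, ?_⟩
  unfold numTop
  rw [hB]
  have hset : (Finset.univ.filter (fun j => b j = k ∧ Q j k = hiQ Q k a))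
      = (Finset.univ.filter (fun j => a j = k ∧ Q j k = hiQ Q k a)).erase p := by
    apply Finset.ext
    intro j
    simp only [Finset.mem_filter, Finset.mem_univ, true_and, Finset.mem_erase]
    by_cases hj : j = p
    · subst hj
      constructor
      · rintro ⟨h, -⟩; exact absurd h hb
      · rintro ⟨h, -⟩; exact absurd rfl h
    · rw [hmove j hj]
      exact ⟨fun h => ⟨hj, h⟩, fun h => h.2⟩
  rw [hset, Finset.card_erase_of_mem]
  simp only [Finset.mem_filter, Finset.mem_univ, true_and]
  exact ⟨ha, hw⟩


end AuxPRP

namespace AuxPRP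

variable {n m : ℕ} (D : Fin m → ℝ) (Q : Fin n → Fin m → ℝ)

lemma prp_nonneg (k : Fin m) (a : Fin n → Fin m) (j : Fin n) : 0 ≤ prp Q k a j := by
  unfold prp
  split
  · positivity
  · exact le_rfl

lemma uEx_nonneg (hD : ∀ k, 0 ≤ D k) (a : Fin n → Fin m) (j : Fin n) :
    0 ≤ uEx D Q a j :=
  mul_nonneg (hD _) (prp_nonneg Q _ a j)

lemma uEx_winner (a : Fin n → Fin m) (j : Fin n) (hw : Q j (a j) = hiQ Q (a j) a) :
    uEx D Q a j = D (a j) * (1 / (numTop Q (a j) a : ℝ)) := by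
  unfold uEx prp
  rw [if_pos ⟨rfl, hw⟩]

lemma uEx_pos_winner (a : Fin n → Fin m) (j : Fin n) (hpos : 0 < uEx D Q a j) :
    Q j (a j) = hiQ Q (a j) a := by
  by_contra h
  unfold uEx prp at hpos
  rw [if_neg (fun hc => h hc.2), mul_zero] at hpos
  exact lt_irrefl _ hpos

lemma impStep_unique {u : (Fin n → Fin m) → Fin n → ℝ} {a b : Fin n → Fin m} {p q : Fin n}
    (h1 : ImpStep u a b p) (h2 : ImpStep u a b q) : p = q := by
  by_contra hpq
  exact h1.2.1 (h2.1 p hpq)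

end AuxPRP

namespace AuxPRP

variable {n m : ℕ}

lemma no_inf_path (D : Fin m → ℝ) (Q : Fin n → Fin m → ℝ) (hD : ∀ k, 0 ≤ D k) :
    ¬ ∃ γ : ℕ → Fin n → Fin m, ∀ r : ℕ, ∃ p, ImpStep (uEx D Q) (γ r) (γ (r + 1)) p := by
  classical
  rintro ⟨γ, hγ⟩
  -- the (unique) mover at each step
  let p : ℕ → Fin n := fun τ => (hγ τ).choose
  have hstep : ∀ τ, ImpStep (uEx D Q) (γ τ) (γ (τ + 1)) (p τ) := fun τ => (hγ τ).choose_spec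
  -- the transition at each step
  let F : ℕ → ((Fin n → Fin m) × (Fin n → Fin m)) := fun τ => (γ τ, γ (τ + 1))
  -- post-move utility, as a function of the transition
  let g : ((Fin n → Fin m) × (Fin n → Fin m)) → ℝ := fun x =>
    if h : ∃ q, ImpStep (uEx D Q) x.1 x.2 q then uEx D Q x.2 h.choose else 0
  have hg : ∀ τ, g (F τ) = uEx D Q (γ (τ + 1)) (p τ) := by
    intro τ
    simp only [g, F]
    rw [dif_pos (hγ τ)]
  -- eventually every transition occurs infinitely often
  have hBadfin : {τ : ℕ | ({s | F s = F τ}).Finite}.Finite := by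
    have hsub : {τ : ℕ | ({s | F s = F τ}).Finite} ⊆
        ⋃ x : (Fin n → Fin m) × (Fin n → Fin m),
          {s | F s = x ∧ ({u | F u = x}).Finite} := by
      intro τ hτ
      exact Set.mem_iUnion.2 ⟨F τ, rfl, hτ⟩
    refine Set.Finite.subset (Set.finite_iUnion ?_) hsub
    intro x
    by_cases hx : ({u | F u = x}).Finite
    · exact hx.subset fun s hs => hs.1
    · have : {s | F s = x ∧ ({u | F u = x}).Finite} = ∅ := by
        ext s; simp [hx]
      rw [this]; exact Set.finite_empty
  obtain ⟨B0, hB0⟩ := hBadfin.bddAbove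
  have hT : ∀ τ, B0 + 1 ≤ τ → ({s | F s = F τ}).Infinite := by
    intro τ hτ hfin
    have hmem : τ ∈ {τ : ℕ | ({s | F s = F τ}).Finite} := hfin
    have := hB0 hmem
    omega
  -- choose the step of maximal post-move utility among recurrent steps
  have hRfin : (F '' Set.Ici (B0 + 1)).Finite := Set.toFinite _
  have hRne : (F '' Set.Ici (B0 + 1)).Nonempty := ⟨F (B0 + 1), B0 + 1, Set.self_mem_Ici, rfl⟩
  obtain ⟨x0, hx0mem, hmax⟩ := Set.exists_max_image _ g hRfin hRne
  obtain ⟨t, ht, hxt⟩ := hx0mem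
  -- notation for the maximal step
  have hstept := hstep t
  have hMmax : ∀ τ, B0 + 1 ≤ τ → uEx D Q (γ (τ + 1)) (p τ) ≤ uEx D Q (γ (t + 1)) (p t) := by
    intro τ hτ
    have h1 := hmax (F τ) ⟨τ, hτ, rfl⟩
    rw [hg τ, ← hxt, hg t] at h1
    exact h1
  set k : Fin m := (γ (t + 1)) (p t) with hk
  set Hp : ℕ := numTop Q k (γ (t + 1)) with hHp
  have hMpos : 0 < uEx D Q (γ (t + 1)) (p t) :=
    lt_of_le_of_lt (uEx_nonneg D Q hD (γ t) (p t)) hstept.2.2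
  have hwin_t : Q (p t) k = hiQ Q k (γ (t + 1)) :=
    uEx_pos_winner D Q (γ (t + 1)) (p t) hMpos
  have hMval : uEx D Q (γ (t + 1)) (p t) = D k * (1 / (Hp : ℝ)) :=
    uEx_winner D Q (γ (t + 1)) (p t) hwin_t
  have hDk : 0 < D k := by
    rcases (hD k).lt_or_eq with h | h
    · exact h
    · exfalso
      rw [hMval, ← h, zero_mul] at hMpos
      exact lt_irrefl _ hMpos
  have hHp_pos : 0 < Hp := by
    have : p t ∈ Finset.univ.filter
        (fun j => γ (t + 1) j = k ∧ Q j k = hiQ Q k (γ (t + 1))) :=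
      Finset.mem_filter.2 ⟨Finset.mem_univ _, rfl, hwin_t⟩
    have := Finset.card_pos.2 ⟨p t, this⟩
    exact this
  -- Claim 1: whenever a winner on k moves away (at a recurrent step), numTop k was > Hp
  have claim1 : ∀ τ, B0 + 1 ≤ τ → γ τ (p τ) = k → Q (p τ) k = hiQ Q k (γ τ) →
      Hp < numTop Q k (γ τ) := by
    intro τ hτ hon hw
    have hmem : p τ ∈ Finset.univ.filter (fun j => γ τ j = k ∧ Q j k = hiQ Q k (γ τ)) :=
      Finset.mem_filter.2 ⟨Finset.mem_univ _, hon, hw⟩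
    have hpos : 0 < numTop Q k (γ τ) := by
      unfold numTop; exact Finset.card_pos.2 ⟨p τ, hmem⟩
    have hw' : Q (p τ) (γ τ (p τ)) = hiQ Q (γ τ (p τ)) (γ τ) := by rwa [hon]
    have hpre : uEx D Q (γ τ) (p τ) = D k * (1 / (numTop Q k (γ τ) : ℝ)) := by
      have := uEx_winner D Q (γ τ) (p τ) hw'
      rwa [hon] at this
    have hlt : D k * (1 / (numTop Q k (γ τ) : ℝ)) < D k * (1 / (Hp : ℝ)) := by
      rw [← hpre, ← hMval]
      exact lt_of_lt_of_le (hstep τ).2.2 (hMmax τ hτ)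
    have h2 : (1 : ℝ) / (numTop Q k (γ τ) : ℝ) < 1 / (Hp : ℝ) :=
      lt_of_mul_lt_mul_left hlt hDk.le
    have h3 : (1:ℝ) * (Hp : ℝ) < 1 * (numTop Q k (γ τ) : ℝ) :=
      (div_lt_div_iff₀ (by exact_mod_cast hpos) (by exact_mod_cast hHp_pos)).1 h2
    rw [one_mul, one_mul] at h3
    exact_mod_cast h3
  -- Claim 2: after time t+1, numTop k never drops below Hp and hiQ k never decreases
  have claim2 : ∀ τ, t + 1 ≤ τ →
      Hp ≤ numTop Q k (γ τ) ∧ hiQ Q k (γ (t + 1)) ≤ hiQ Q k (γ τ) := by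
    intro τ hτ
    induction τ, hτ using Nat.le_induction with
    | base => exact ⟨le_rfl, le_rfl⟩
    | succ τ hτ ih =>
      have hτT : B0 + 1 ≤ τ := le_trans ht (by omega)
      obtain ⟨ih1, ih2⟩ := ih
      have hmove : ∀ j, j ≠ p τ → γ (τ + 1) j = γ τ j := (hstep τ).1
      have hne : γ (τ + 1) (p τ) ≠ γ τ (p τ) := (hstep τ).2.1
      by_cases hA : γ τ (p τ) = k
      · -- mover leaves k
        have hB : γ (τ + 1) (p τ) ≠ k := fun h => hne (h.trans hA.symm)
        by_cases hw : Q (p τ) k = hiQ Q k (γ τ)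
        · -- winner leaves
          have hgt := claim1 τ hτT hA hw
          obtain ⟨e1, e2⟩ := leave_winner Q k (p τ) hmove hA hB hw (by omega)
          constructor
          · rw [e2]; omega
          · rw [e1]; exact ih2
        · obtain ⟨e1, e2⟩ := leave_loser Q k (p τ) hmove hA hB hw
          exact ⟨by rw [e2]; exact ih1, by rw [e1]; exact ih2⟩
      · by_cases hB : γ (τ + 1) (p τ) = k
        · -- mover joins k, necessarily as a winner
          have hpos : 0 < uEx D Q (γ (τ + 1)) (p τ) :=
            lt_of_le_of_lt (uEx_nonneg D Q hD (γ τ) (p τ)) (hstep τ).2.2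
          have hwB : Q (p τ) k = hiQ Q k (γ (τ + 1)) := by
            have := uEx_pos_winner D Q (γ (τ + 1)) (p τ) hpos
            rwa [hB] at this
          have hjoin := hiQ_join Q k (p τ) hmove hA hB
          have hge : hiQ Q k (γ τ) ≤ Q (p τ) k := by
            by_contra hcon
            push_neg at hcon
            rw [hjoin, max_eq_right hcon.le] at hwB
            exact absurd hwB (ne_of_lt hcon)
          rcases hge.lt_or_eq with hgt | heq
          · -- beat join
            obtain ⟨e1, e2⟩ := numTop_join_beat Q k (p τ) hmove hA hB hgt
            have hpostval : uEx D Q (γ (τ + 1)) (p τ) = D k * (1 / ((1 : ℕ) : ℝ)) := by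
              have := uEx_winner D Q (γ (τ + 1)) (p τ) (by rwa [hB])
              rw [hB] at this
              rwa [e1] at this
            have hle : D k * (1 / ((1:ℕ) : ℝ)) ≤ D k * (1 / (Hp : ℝ)) := by
              rw [← hpostval, ← hMval]; exact hMmax τ hτT
            have h1 : (1 : ℝ) ≤ 1 / (Hp : ℝ) := by
              have := le_of_mul_le_mul_left hle hDk
              simpa using this
            have hHple : (Hp : ℝ) ≤ 1 := by
              have h2 := (le_div_iff₀ (by exact_mod_cast hHp_pos : (0:ℝ) < (Hp:ℝ))).1 h1
              simpa using h2
            have : Hp = 1 := by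
              have : Hp ≤ 1 := by exact_mod_cast hHple
              omega
            constructor
            · rw [e1]; omega
            · rw [e2]; exact le_trans ih2 hgt.le
          · -- tie join
            obtain ⟨e1, e2⟩ := numTop_join_tie Q k (p τ) hmove hA hB heq.symm
            exact ⟨by rw [e1]; omega, by rw [e2]; exact ih2⟩
        · obtain e1 := numTop_off Q k (p τ) hmove hA hB
          obtain e2 := hiQ_off Q k (p τ) hmove hA hB
          exact ⟨by rw [e1]; exact ih1, by rw [e2]; exact ih2⟩
  -- Final contradiction using recurrence of the maximal step
  have hAp : γ t (p t) ≠ k := fun h => hstept.2.1 h.symm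
  have hjoin := hiQ_join Q k (p t) hstept.1 hAp rfl
  have hge : hiQ Q k (γ t) ≤ Q (p t) k := by
    by_contra hcon
    push_neg at hcon
    rw [hjoin, max_eq_right hcon.le] at hwin_t
    exact absurd hwin_t (ne_of_lt hcon)
  have hinf := hT t ht
  rcases hge.lt_or_eq with hgt | heq
  · -- beat join at step t : hiQ strictly increases, contradicting recurrence + monotonicity
    obtain ⟨t3, ht3mem, ht3gt⟩ := hinf.exists_gt (t + 1)
    have hFt3 : γ t3 = γ t := congrArg Prod.fst ht3mem
    have hmono := (claim2 t3 (by omega)).2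
    rw [hFt3] at hmono
    have hBt : hiQ Q k (γ (t + 1)) = Q (p t) k := by
      rw [hjoin, max_eq_left hgt.le]
    rw [hBt] at hmono
    exact absurd (lt_of_le_of_lt hmono hgt) (lt_irrefl _)
  · -- tie join at step t : numTop was Hp - 1 before t, contradicting recurrence + Claim 2
    obtain ⟨e1, e2⟩ := numTop_join_tie Q k (p t) hstept.1 hAp rfl heq.symm
    obtain ⟨t2, ht2mem, ht2gt⟩ := hinf.exists_gt t
    have hFt2 : γ t2 = γ t := congrArg Prod.fst ht2mem
    have hle := (claim2 t2 (by omega)).1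
    rw [hFt2] at hle
    -- e1 : numTop (γ (t+1)) = numTop (γ t) + 1, and numTop (γ (t+1)) = Hp
    have he : Hp = numTop Q k (γ t) + 1 := e1
    omega

end AuxPRP

/-- The PRP mediator is `u^{Ex}`-learnable: there is no infinite improvement path
(the finite improvement property), and the game has a pure Nash equilibrium. -/
theorem stmt4 {n m : ℕ} (hm : 0 < m) (D : Fin m → ℝ) (Q : Fin n → Fin m → ℝ)
    (hD : ∀ k, 0 ≤ D k) (hDsum : ∑ k, D k = 1)
    (hQ : ∀ j k, Q j k ∈ Set.Icc (0:ℝ) 1) :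
    (¬ ∃ γ : ℕ → Fin n → Fin m, ∀ r : ℕ, ∃ p, ImpStep (uEx D Q) (γ r) (γ (r + 1)) p) ∧
    ∃ a : Fin n → Fin m, ∀ (j : Fin n) (k : Fin m),
      uEx D Q (Function.update a j k) j ≤ uEx D Q a j := by
  classical
  have hno := AuxPRP.no_inf_path D Q hD
  refine ⟨hno, ?_⟩
  by_contra hcon
  push_neg at hcon
  choose J K hJK using hcon
  let f : (Fin n → Fin m) → (Fin n → Fin m) := fun a => Function.update a (J a) (K a)
  let γ : ℕ → Fin n → Fin m := fun r => f^[r] (fun _ => ⟨0, hm⟩)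
  apply hno
  refine ⟨γ, fun r => ?_⟩
  have hγs : γ (r + 1) = Function.update (γ r) (J (γ r)) (K (γ r)) := by
    show f^[r + 1] _ = _
    rw [Function.iterate_succ_apply' f r _]
  have hKne : K (γ r) ≠ γ r (J (γ r)) := by
    intro h
    have h2 := hJK (γ r)
    rw [h, Function.update_eq_self] at h2
    exact lt_irrefl _ h2
  refine ⟨J (γ r), ?_, ?_, ?_⟩
  · intro i hi
    rw [hγs, Function.update_of_ne hi]
  · rw [hγs, Function.update_self]
    exact hKne
  · rw [hγs]
    exact hJK (γ r)
end
end

section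
/- The random mediator R^{RAND} is u^{Ex}-learnable: every authors game with the random mediator and exposure-targeted utility has the finite improvement property. -/
open Finset

noncomputable section

/-- The random mediator: author `j` gets first-rank probability
`1 / #{i : a_i = a_j}`, independently of qualities. -/
def randMed {n m : ℕ} (k : Fin m) (a : Fin n → Fin m) (j : Fin n) : ℝ :=
  if a j = k then 1 / (((Finset.univ.filter (fun i => a i = k)).card : ℝ)) else 0

/-- Exposure-targeted utility under the random mediator. -/
def uExRand {n m : ℕ} (D : Fin m → ℝ) (a : Fin n → Fin m) (j : Fin n) : ℝ :=
  D (a j) * randMed (a j) a j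

namespace Stmt10Aux

variable {n m : ℕ}

/-- number of authors on topic k -/
def cnt (a : Fin n → Fin m) (k : Fin m) : ℕ :=
  (Finset.univ.filter (fun i => a i = k)).card

/-- Rosenthal potential -/
def pot (D : Fin m → ℝ) (a : Fin n → Fin m) : ℝ :=
  ∑ k, ∑ i ∈ Finset.range (cnt a k), D k / (i + 1)

lemma cnt_succ {a b : Fin n → Fin m} {p : Fin n} (h1 : ∀ i, i ≠ p → b i = a i)
    (h2 : b p ≠ a p) : cnt b (b p) = cnt a (b p) + 1 := by
  unfold cnt
  have hset : Finset.univ.filter (fun i => b i = b p)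
      = insert p (Finset.univ.filter (fun i => a i = b p)) := by
    ext i
    simp only [Finset.mem_insert, Finset.mem_filter, Finset.mem_univ, true_and]
    constructor
    · intro hi
      by_cases hip : i = p
      · exact Or.inl hip
      · exact Or.inr (by rw [← h1 i hip]; exact hi)
    · rintro (rfl | hi)
      · rfl
      · have hip : i ≠ p := by rintro rfl; exact h2 hi.symm
        rw [h1 i hip]; exact hi
  have hnot : p ∉ Finset.univ.filter (fun i => a i = b p) := by
    simp only [Finset.mem_filter, Finset.mem_univ, true_and]
    exact fun h => h2 h.symm
  rw [hset, Finset.card_insert_of_notMem hnot, add_comm]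

lemma cnt_other {a b : Fin n → Fin m} {p : Fin n} (h1 : ∀ i, i ≠ p → b i = a i)
    {k : Fin m} (hk1 : k ≠ a p) (hk2 : k ≠ b p) : cnt b k = cnt a k := by
  unfold cnt
  congr 1
  ext i
  simp only [Finset.mem_filter, Finset.mem_univ, true_and]
  by_cases hip : i = p
  · subst hip
    constructor
    · intro h; exact absurd h.symm hk2
    · intro h; exact absurd h.symm hk1
  · rw [h1 i hip]

lemma uExRand_eq (D : Fin m → ℝ) (a : Fin n → Fin m) (p : Fin n) :
    uExRand D a p = D (a p) / (cnt a (a p) : ℝ) := by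
  unfold uExRand randMed cnt
  simp [mul_one_div, div_eq_mul_inv]

lemma pot_lt {D : Fin m → ℝ} {a b : Fin n → Fin m} {p : Fin n}
    (h : ImpStep (uExRand D) a b p) : pot D a < pot D b := by
  obtain ⟨h1, h2, h3⟩ := h
  have h1' : ∀ i, i ≠ p → a i = b i := fun i hi => (h1 i hi).symm
  have hB : cnt b (b p) = cnt a (b p) + 1 := cnt_succ h1 h2
  have hA : cnt a (a p) = cnt b (a p) + 1 := cnt_succ h1' h2.symm
  have hne : a p ≠ b p := fun h => h2 h.symm
  have hdiff : pot D b - pot D a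
      = uExRand D b p - uExRand D a p := by
    have hsub : pot D b - pot D a = ∑ k, ((∑ i ∈ Finset.range (cnt b k), D k / (i + 1))
        - (∑ i ∈ Finset.range (cnt a k), D k / (i + 1))) := by
      rw [pot, pot, ← Finset.sum_sub_distrib]
    rw [hsub]
    have hz : ∀ k ∈ (Finset.univ : Finset (Fin m)), k ∉ ({a p, b p} : Finset (Fin m)) →
        ((∑ i ∈ Finset.range (cnt b k), D k / (i + 1))
        - (∑ i ∈ Finset.range (cnt a k), D k / (i + 1))) = 0 := by
      intro k _ hk
      simp only [Finset.mem_insert, Finset.mem_singleton, not_or] at hk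
      rw [cnt_other h1 hk.1 hk.2, sub_self]
    rw [← Finset.sum_subset (Finset.subset_univ ({a p, b p} : Finset (Fin m))) hz,
        Finset.sum_pair hne]
    rw [hA, hB, Finset.sum_range_succ, Finset.sum_range_succ,
        uExRand_eq, uExRand_eq, hA, hB]
    push_cast
    ring
  linarith

end Stmt10Aux

/-- The random mediator is `u^{Ex}`-learnable: every authors game with the random
mediator and exposure-targeted utility has the finite improvement property. -/
theorem stmt10 {n m : ℕ} (D : Fin m → ℝ)
    (hD : ∀ k, 0 ≤ D k) (hDsum : ∑ k, D k = 1) :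
    ¬ ∃ γ : ℕ → Fin n → Fin m, ∀ r : ℕ, ∃ p,
      ImpStep (uExRand D) (γ r) (γ (r + 1)) p := by
  rintro ⟨γ, hγ⟩
  have hmono : StrictMono (fun r => Stmt10Aux.pot D (γ r)) := by
    apply strictMono_nat_of_lt_succ
    intro r
    obtain ⟨p, hp⟩ := hγ r
    exact Stmt10Aux.pot_lt hp
  have hinj : Function.Injective γ := fun i j h =>
    hmono.injective (congrArg (Stmt10Aux.pot D) h)
  obtain ⟨i, j, hne, heq⟩ := Finite.exists_ne_map_eq_of_infinite γ
  exact hne (hinj heq)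
end
end

section
/- For any reals c₁ > 1, c₂ > 2c₁ and ε with 0 < ε ≤ 1/4 satisfying c₁(1+c₂)/(c₂(1+2c₁)) < (1−2ε)/2, 1/(1+c₁) < (1−4ε)/2, and c₂(1−4ε) > 1, the following six inequalities hold, where D(1)=1/(2−3ε), D(2)=(1−2ε)/(2(2−3ε)), D(3)=(1−4ε)/(2(2−3ε)): (i) (c₁/(1+2c₁))·D(1) < (c₂/(1+c₂))·D(2); (ii) (1/(1+c₁))·D(1) < D(3); (iii) (1/(1+c₂))·D(2) < (c₂/(1+c₂))·D(3); (iv) D(2) < (1/2)·D(1); (v) (1/(1+c₂))·D(3) < (1/(1+2c₁))·D(1); (vi) D(3) < D(2). -/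
/-- The six utility-improvement inequalities for the 6-step improvement cycle in the
4-author, 3-topic scoring-mediator game, where `D(1) = 1/(2−3ε)`,
`D(2) = (1−2ε)/(2(2−3ε))`, `D(3) = (1−4ε)/(2(2−3ε))`. -/
theorem stmt14 (c₁ c₂ ε : ℝ) (hc1 : 1 < c₁) (hc2 : 2 * c₁ < c₂)
    (hε0 : 0 < ε) (hε4 : ε ≤ 1 / 4)
    (h1 : c₁ * (1 + c₂) / (c₂ * (1 + 2 * c₁)) < (1 - 2 * ε) / 2)
    (h2 : 1 / (1 + c₁) < (1 - 4 * ε) / 2)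
    (h3 : 1 < c₂ * (1 - 4 * ε)) :
    (c₁ / (1 + 2 * c₁)) * (1 / (2 - 3 * ε)) <
        (c₂ / (1 + c₂)) * ((1 - 2 * ε) / (2 * (2 - 3 * ε))) ∧
    (1 / (1 + c₁)) * (1 / (2 - 3 * ε)) < (1 - 4 * ε) / (2 * (2 - 3 * ε)) ∧
    (1 / (1 + c₂)) * ((1 - 2 * ε) / (2 * (2 - 3 * ε))) <
        (c₂ / (1 + c₂)) * ((1 - 4 * ε) / (2 * (2 - 3 * ε))) ∧
    (1 - 2 * ε) / (2 * (2 - 3 * ε)) < (1 / 2) * (1 / (2 - 3 * ε)) ∧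
    (1 / (1 + c₂)) * ((1 - 4 * ε) / (2 * (2 - 3 * ε))) <
        (1 / (1 + 2 * c₁)) * (1 / (2 - 3 * ε)) ∧
    (1 - 4 * ε) / (2 * (2 - 3 * ε)) < (1 - 2 * ε) / (2 * (2 - 3 * ε)) := by
  have hd : (0:ℝ) < 2 - 3 * ε := by linarith
  have h1c : (0:ℝ) < 1 + c₁ := by linarith
  have h2c : (0:ℝ) < 1 + 2 * c₁ := by linarith
  have h3c : (0:ℝ) < 1 + c₂ := by linarith
  have hc2p : (0:ℝ) < c₂ := by linarith
  have key1 : c₁ * (1 + c₂) * 2 < (1 - 2 * ε) * (c₂ * (1 + 2 * c₁)) := by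
    have := (div_lt_div_iff₀ (by positivity) (by norm_num : (0:ℝ) < 2)).mp h1
    linarith
  have key2 : 1 * 2 < (1 - 4 * ε) * (1 + c₁) := by
    have := (div_lt_div_iff₀ h1c (by norm_num : (0:ℝ) < 2)).mp h2
    linarith
  refine ⟨?_, ?_, ?_, ?_, ?_, ?_⟩
  · rw [div_mul_div_comm, div_mul_div_comm, div_lt_div_iff₀ (by positivity) (by positivity)]
    nlinarith [mul_pos hd hc2p, mul_pos hd h2c]
  · rw [div_mul_div_comm, div_lt_div_iff₀ (by positivity) (by positivity)]
    nlinarith [hd]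
  · rw [div_mul_div_comm, div_mul_div_comm, div_lt_div_iff₀ (by positivity) (by positivity)]
    nlinarith [mul_pos hd h3c, mul_pos hd hd]
  · rw [mul_one_div, div_lt_div_iff₀ (by positivity) (by positivity)]
    nlinarith
  · rw [div_mul_div_comm, div_mul_div_comm, div_lt_div_iff₀ (by positivity) (by positivity)]
    nlinarith [mul_pos hd hd, mul_pos hd h2c, mul_pos hd h3c]
  · rw [div_lt_div_iff₀ (by positivity) (by positivity)]; nlinarith
end

section
/- Let R^f be a scoring mediator where f: ℝ → ℝ₊ is non-decreasing and continuous with f(1) > 2f(0). Then R^f is not u^{Ex}-learnable: there exists an authors game with mediator R^f and exposure-targeted utility containing an improvement cycle (hence lacking the finite improvement property). -/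
open Finset

noncomputable section

/-- A scoring mediator with scoring function `f`: author `j` writing on topic `k`
gets first-rank probability `f(Q_{j,k}) / Σ_{i : a_i = k} f(Q_{i,k})`. -/
def scoreMed {n m : ℕ} (f : ℝ → ℝ) (Q : Fin n → Fin m → ℝ) (k : Fin m)
    (a : Fin n → Fin m) (j : Fin n) : ℝ :=
  if a j = k then
    f (Q j k) / (∑ i ∈ Finset.univ.filter (fun i => a i = k), f (Q i k))
  else 0

/-- Exposure-targeted utility under the scoring mediator `R^f`. -/
def uExScore {n m : ℕ} (f : ℝ → ℝ) (D : Fin m → ℝ) (Q : Fin n → Fin m → ℝ)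
    (a : Fin n → Fin m) (j : Fin n) : ℝ :=
  D (a j) * scoreMed f Q (a j) a j

/-- Action-targeted utility under the scoring mediator `R^f`. -/
def uAcScore {n m : ℕ} (f : ℝ → ℝ) (D : Fin m → ℝ) (Q : Fin n → Fin m → ℝ)
    (a : Fin n → Fin m) (j : Fin n) : ℝ :=
  D (a j) * scoreMed f Q (a j) a j * Q j (a j)


/-!
The first-rank probabilities `f (Q j k) / ∑_{i : a i = k} f (Q i k)` depend on `Q` only through the
scores `f ∘ Q` and do not change when all scores are multiplied by the same nonzero constant. So it
suffices to exhibit an improvement cycle for one fixed score matrix with entries in `[1/2, 1]`: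
since `f` is continuous and `f 0 < f 1 / 2`, the intermediate value theorem realises `f 1` times
that matrix as `f ∘ Q` for a quality matrix `Q` with entries in `[0, 1]`. The cycle (four authors,
three topics, six deviations) is then checked by direct computation.
-/

section ScaleInvariance

variable {n m : ℕ}

theorem uExScore_comp (f : ℝ → ℝ) (D : Fin m → ℝ) (Q : Fin n → Fin m → ℝ) :
    uExScore f D Q = uExScore id D (fun j k => f (Q j k)) :=
  rfl

theorem uExScore_id_smul (D : Fin m → ℝ) (S : Fin n → Fin m → ℝ) {c : ℝ} (hc : c ≠ 0) :
    uExScore id D (c • S) = uExScore id D S := by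
  funext a j
  simp only [uExScore, scoreMed, id, Pi.smul_apply, smul_eq_mul, ← Finset.mul_sum,
    mul_div_mul_left _ _ hc]

end ScaleInvariance

theorem exists_comp_eq_of_mem_Icc {ι κ : Type*} {f : ℝ → ℝ} (hf : Continuous f)
    (S : ι → κ → ℝ) (hS : ∀ i k, S i k ∈ Set.Icc (f 0) (f 1)) :
    ∃ Q : ι → κ → ℝ, (∀ i k, Q i k ∈ Set.Icc (0 : ℝ) 1) ∧ ∀ i k, f (Q i k) = S i k := by
  choose Q hQ hfQ using fun i k => intermediate_value_Icc zero_le_one hf.continuousOn (hS i k)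
  exact ⟨Q, hQ, hfQ⟩

def cycleD : Fin 3 → ℝ := ![100/225, 62/225, 63/225]

/-- Normalised scores `f (Q j k) / f 1` of the paper's witness: `9/10, 4/5, 1/2` are
`f x₃ / f 1, f x₂ / f 1, f x₁ / f 1`, and all other qualities are `1`. -/
def cycleScores : Fin 4 → Fin 3 → ℝ :=
  ![![9/10, 1, 1], ![4/5, 1, 1], ![1/2, 1, 1], ![1, 1, 1/2]]

def cyclePath : Fin 7 → Fin 4 → Fin 3 :=
  ![![0,0,0,1], ![0,0,0,2], ![2,0,0,2], ![2,1,0,2], ![2,1,0,1], ![0,1,0,1], ![0,0,0,1]]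

theorem cycleScores_mem_Icc (j : Fin 4) (k : Fin 3) : cycleScores j k ∈ Set.Icc (1/2 : ℝ) 1 := by
  fin_cases j <;> fin_cases k <;> norm_num [cycleScores]

theorem isImpPath_cyclePath : IsImpPath (uExScore id cycleD cycleScores) cyclePath := by
  intro r
  refine ⟨![3, 0, 1, 3, 0, 1] r, ?_⟩
  fin_cases r <;> refine ⟨by decide, by decide, ?_⟩ <;>
    simp [uExScore, scoreMed, Finset.sum_filter, Fin.sum_univ_four, cycleD, cycleScores,
      cyclePath] <;>
    norm_num

theorem stmt15_general (f : ℝ → ℝ) (hf0 : ∀ x, 0 ≤ f x)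
    (hcont : Continuous f) (hgap : 2 * f 0 < f 1) :
    ∃ (n m l : ℕ) (D : Fin m → ℝ) (Q : Fin n → Fin m → ℝ)
      (γ : Fin (l + 1) → Fin n → Fin m),
      0 < l ∧ (∀ k, 0 ≤ D k) ∧ (∑ k, D k = 1) ∧
      (∀ j k, Q j k ∈ Set.Icc (0:ℝ) 1) ∧
      IsImpPath (uExScore f D Q) γ ∧ γ (Fin.last l) = γ 0 := by
  have hf1 : 0 < f 1 := by linarith [hf0 0]
  have hS : ∀ j k, (f 1 • cycleScores) j k ∈ Set.Icc (f 0) (f 1) := fun j k => by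
    obtain ⟨hlo, hhi⟩ := cycleScores_mem_Icc j k
    constructor <;> simp only [Pi.smul_apply, smul_eq_mul] <;> nlinarith
  obtain ⟨Q, hQ, hfQ⟩ := exists_comp_eq_of_mem_Icc hcont _ hS
  have hutil : uExScore f cycleD Q = uExScore id cycleD cycleScores := by
    rw [uExScore_comp, show (fun j k => f (Q j k)) = f 1 • cycleScores from funext₂ hfQ,
      uExScore_id_smul _ _ hf1.ne']
  refine ⟨4, 3, 6, cycleD, Q, cyclePath, by norm_num, ?_, ?_, hQ, hutil ▸ isImpPath_cyclePath, rfl⟩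
  · intro k
    fin_cases k <;> norm_num [cycleD]
  · simp only [cycleD, Fin.sum_univ_three, Matrix.cons_val_zero, Matrix.cons_val_one, Matrix.cons_val]
    norm_num

/-- A scoring mediator `R^f` with `f` non-decreasing, continuous, nonnegative and
`f(1) > 2f(0)` is not `u^{Ex}`-learnable: some authors game with mediator `R^f` and
exposure-targeted utility contains an improvement cycle. -/
theorem stmt15 (f : ℝ → ℝ) (hf0 : ∀ x, 0 ≤ f x) (hmono : Monotone f)
    (hcont : Continuous f) (hgap : 2 * f 0 < f 1) :
    ∃ (n m l : ℕ) (D : Fin m → ℝ) (Q : Fin n → Fin m → ℝ)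
      (γ : Fin (l + 1) → Fin n → Fin m),
      0 < l ∧ (∀ k, 0 ≤ D k) ∧ (∑ k, D k = 1) ∧
      (∀ j k, Q j k ∈ Set.Icc (0:ℝ) 1) ∧
      IsImpPath (uExScore f D Q) γ ∧ γ (Fin.last l) = γ 0 :=
  stmt15_general f hf0 hcont hgap
end
end

section
/- Let R^f be a scoring mediator where f is continuous and there exist α, β > 0 with αx ≤ f(x) ≤ βx for all x ∈ [0,1]. Then R^f is not u^{Ac}-learnable: some authors game with mediator R^f and action-targeted utility contains an improvement cycle. -/
open Finset

noncomputable section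

/-!
Author 0 writes on topic 1 with quality `x` or on topic 2 with quality `y`, authors 1 and 2 have
the qualities `u` and `v` on every topic, and author 3 stays on topic 2. Along `cycleProfile`
authors 0, 2, 1 move twice each and the profile returns to its start; every move is an
improvement as soon as six polynomial inequalities between the demands and the weights
`f x, f y, f u, f v` hold. Since `f 0 = 0 < f 1`, the intermediate value theorem lets us prescribe
these weights anywhere in `(0, f 1]`; only the ratio `ρ = x / y ≥ 1` escapes our control, and a
demand of about `2ρ` on topic 2 together with weights of order `1 / ρ` for authors 1 and 2
satisfies all six inequalities.
-/

lemma uAcScore_div_const {n m : ℕ} (f : ℝ → ℝ) (D : Fin m → ℝ) (Q : Fin n → Fin m → ℝ)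
    (S : ℝ) : uAcScore f (fun k => D k / S) Q = fun a j => uAcScore f D Q a j / S := by
  funext a j
  simp only [uAcScore]
  ring

lemma IsImpPath.div_const {n m l : ℕ} {u : (Fin n → Fin m) → Fin n → ℝ}
    {γ : Fin (l + 1) → Fin n → Fin m} (h : IsImpPath u γ) {S : ℝ} (hS : 0 < S) :
    IsImpPath (fun a j => u a j / S) γ := by
  intro r
  obtain ⟨p, hfix, hmove, hlt⟩ := h r
  exact ⟨p, hfix, hmove, div_lt_div_of_pos_right hlt hS⟩

def cycleProfile : Fin 7 → Fin 4 → Fin 3 :=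
  ![![1, 0, 0, 2], ![2, 0, 0, 2], ![2, 0, 2, 2], ![2, 1, 2, 2], ![1, 1, 2, 2], ![1, 1, 0, 2],
    ![1, 0, 0, 2]]

def cycleQuality (x y u v : ℝ) : Fin 4 → Fin 3 → ℝ :=
  ![![x, x, y], ![u, u, u], ![v, v, v], ![y, y, y]]

lemma cycleProfile_last : cycleProfile (Fin.last 6) = cycleProfile 0 := rfl

lemma cycleQuality_mem {s : Set ℝ} {x y u v : ℝ} (hx : x ∈ s) (hy : y ∈ s) (hu : u ∈ s)
    (hv : v ∈ s) (j : Fin 4) (k : Fin 3) : cycleQuality x y u v j k ∈ s := by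
  fin_cases j <;> fin_cases k <;> assumption

lemma isImpPath_cycleProfile (f : ℝ → ℝ) {d₀ d₁ d₂ x y u v : ℝ}
    (hfx : 0 < f x) (hfy : 0 < f y) (hfu : 0 < f u) (hfv : 0 < f v) (hu : 0 < u) (hv : 0 < v)
    (h₁ : 2 * d₁ * x < d₂ * y)
    (h₂ : d₀ * (2 * f y + f v) < d₂ * (f u + f v))
    (h₃ : d₀ < d₁)
    (h₄ : d₂ * f y * y * (f x + f u) < d₁ * f x * x * (2 * f y + f v))
    (h₅ : d₂ * f v < d₀ * (f v + f y))
    (h₆ : d₁ * (f u + f v) < d₀ * (f x + f u)) :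
    IsImpPath (uAcScore f ![d₀, d₁, d₂] (cycleQuality x y u v)) cycleProfile := by
  intro r
  refine ⟨![0, 2, 1, 0, 2, 1] r, ?_⟩
  fin_cases r <;> refine ⟨by decide, by decide, ?_⟩ <;>
    simp [uAcScore, scoreMed, Finset.sum_filter, Fin.sum_univ_four, cycleProfile,
      cycleQuality] <;>
    field_simp <;> linarith

lemma isImpPath_cycleProfile_of_ratio (f : ℝ → ℝ) {F ρ c x y u v : ℝ} (hF : 0 < F)
    (hy : 0 < y) (hu : 0 < u) (hv : 0 < v) (hρ : 1 ≤ ρ) (hx : x = ρ * y) (hc : 100 * ρ * c = 1)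
    (hfx : f x = F / 2) (hfy : f y = F / 20) (hfu : f u = 2 * c * F) (hfv : f v = c * F) :
    IsImpPath (uAcScore f ![1 / 2, 1, 2 * ρ + 1 / 20] (cycleQuality x y u v)) cycleProfile := by
  have hc₀ : 0 < c := by nlinarith
  have hc₁ : c ≤ 1 / 100 := by nlinarith
  subst hx
  apply isImpPath_cycleProfile f <;> simp -failIfUnchanged only [hfx, hfy, hfu, hfv] <;>
    try positivity
  case h₃ => norm_num
  case h₄ =>
    -- `h₄` divided by `F ^ 2 * y / 20`
    have hreduced : (2 * ρ + 1 / 20) * (1 / 2 + 2 * c) < 10 * ρ * (1 / 10 + c) := by nlinarith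
    nlinarith [show 0 < F * F * y by positivity]
  all_goals nlinarith

theorem stmt17_general (f : ℝ → ℝ) (hcont : Continuous f) (α β : ℝ)
    (hα : 0 < α)
    (hbound : ∀ x ∈ Set.Icc (0:ℝ) 1, α * x ≤ f x ∧ f x ≤ β * x) :
    ∃ (n m l : ℕ) (D : Fin m → ℝ) (Q : Fin n → Fin m → ℝ)
      (γ : Fin (l + 1) → Fin n → Fin m),
      0 < l ∧ (∀ k, 0 ≤ D k) ∧ (∑ k, D k = 1) ∧
      (∀ j k, Q j k ∈ Set.Icc (0:ℝ) 1) ∧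
      IsImpPath (uAcScore f D Q) γ ∧ γ (Fin.last l) = γ 0 := by
  have hf₀ : f 0 = 0 := by
    have := hbound 0 (by simp)
    simp only [mul_zero] at this
    exact le_antisymm this.2 this.1
  have hf₁ : 0 < f 1 := by linarith [(hbound 1 (by simp)).1]
  have ivt : ∀ {b t : ℝ}, 0 ≤ b → 0 < t → t ≤ f b → ∃ z ∈ Set.Ioc 0 b, f z = t :=
    fun hb ht htb => intermediate_value_Ioc hb hcont.continuousOn ⟨by rwa [hf₀], htb⟩
  obtain ⟨x, ⟨hx₀, hx₁⟩, hfx⟩ := ivt zero_le_one (t := f 1 / 2) (by positivity) (by linarith)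
  obtain ⟨y, ⟨hy₀, hyx⟩, hfy⟩ := ivt hx₀.le (t := f 1 / 20) (by positivity) (by linarith)
  have hρ : 1 ≤ x / y := (one_le_div hy₀).2 hyx
  obtain ⟨c, hc⟩ : ∃ c, 100 * (x / y) * c = 1 := ⟨_, mul_inv_cancel₀ (by positivity)⟩
  have hc₀ : 0 < c := by nlinarith
  have hc₁ : c ≤ 1 / 100 := by nlinarith
  obtain ⟨u, ⟨hu₀, hu₁⟩, hfu⟩ := ivt zero_le_one (t := 2 * c * f 1) (by positivity) (by nlinarith)
  obtain ⟨v, ⟨hv₀, hv₁⟩, hfv⟩ := ivt zero_le_one (t := c * f 1) (by positivity) (by nlinarith)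
  set D : Fin 3 → ℝ := ![1 / 2, 1, 2 * (x / y) + 1 / 20]
  have hD : ∀ k, 0 ≤ D k := by simp [D, Fin.forall_fin_succ]; linarith
  have hS : 0 < ∑ k, D k := by simp [D, Fin.sum_univ_three]; linarith
  refine ⟨4, 3, 6, fun k => D k / ∑ k, D k, cycleQuality x y u v, cycleProfile, by norm_num,
    fun k => div_nonneg (hD k) hS.le, by rw [← Finset.sum_div, div_self hS.ne'],
    cycleQuality_mem ⟨hx₀.le, hx₁⟩ ⟨hy₀.le, hyx.trans hx₁⟩ ⟨hu₀.le, hu₁⟩ ⟨hv₀.le, hv₁⟩, ?_,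
    cycleProfile_last⟩
  rw [uAcScore_div_const]
  exact (isImpPath_cycleProfile_of_ratio f hf₁ hy₀ hu₀ hv₀ hρ (div_mul_cancel₀ x hy₀.ne').symm
    hc hfx hfy hfu hfv).div_const hS

/-- A scoring mediator `R^f` with `f` continuous and linearly bounded
(`αx ≤ f(x) ≤ βx` on `[0,1]` for some `α, β > 0`) is not `u^{Ac}`-learnable:
some authors game with mediator `R^f` and action-targeted utility contains an
improvement cycle. -/
theorem stmt17 (f : ℝ → ℝ) (hcont : Continuous f) (α β : ℝ)
    (hα : 0 < α) (hβ : 0 < β)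
    (hbound : ∀ x ∈ Set.Icc (0:ℝ) 1, α * x ≤ f x ∧ f x ≤ β * x) :
    ∃ (n m l : ℕ) (D : Fin m → ℝ) (Q : Fin n → Fin m → ℝ)
      (γ : Fin (l + 1) → Fin n → Fin m),
      0 < l ∧ (∀ k, 0 ≤ D k) ∧ (∑ k, D k = 1) ∧
      (∀ j k, Q j k ∈ Set.Icc (0:ℝ) 1) ∧
      IsImpPath (uAcScore f D Q) γ ∧ γ (Fin.last l) = γ 0 :=
  stmt17_general f hcont α β hα hbound
end
end

section
/- Let R^f be a scoring mediator where f is continuous, non-decreasing, and f(1) > 2(2α−1)·f(1/α) for some α > 1. Then R^f is not u^{Ac}-learnable: some authors game with mediator R^f and action-targeted utility contains an improvement cycle. -/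
/-!
In the witness game authors 2 and 3 stay on topics 0 and 1 with quality 1, while author 0
(quality 1 everywhere) and author 1 (quality `x₂` on topic 0, `x₃ < x₂` elsewhere) move
alternately through the topic pairs (0,0) → (1,0) → (1,2) → (2,2) → (2,1) → (0,1) → (0,0),
each move strictly raising the mover's utility under demand proportional to `(1, φ, ψ)`.
The gap `2(2α-1) f(1/α) < f 1` lets the intermediate value theorem pick `1/α < x₃ < x₂ ≤ 1`
with `2 f x₃ < f x₂` and `(2α-1) f x₂ < f 1`; these make the six improvement inequalities
simultaneously satisfiable by weights `ψ < 1/2 < φ`.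
-/

open Finset

noncomputable section

lemma uAcScore_smul (f : ℝ → ℝ) {n m : ℕ} (c : ℝ) (D : Fin m → ℝ) (Q : Fin n → Fin m → ℝ)
    (a : Fin n → Fin m) (j : Fin n) :
    uAcScore f (c • D) Q a j = c * uAcScore f D Q a j := by
  simp only [uAcScore, Pi.smul_apply, smul_eq_mul]
  ring

lemma IsImpPath.smul_demand {f : ℝ → ℝ} {n m l : ℕ} {c : ℝ} {D : Fin m → ℝ}
    {Q : Fin n → Fin m → ℝ} {γ : Fin (l + 1) → Fin n → Fin m} (hc : 0 < c)
    (h : IsImpPath (uAcScore f D Q) γ) : IsImpPath (uAcScore f (c • D) Q) γ := by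
  intro r
  obtain ⟨p, hfix, hmove, hlt⟩ := h r
  refine ⟨p, hfix, hmove, ?_⟩
  simpa only [uAcScore_smul] using mul_lt_mul_of_pos_left hlt hc

lemma exists_quality_levels {f : ℝ → ℝ} (hf0 : ∀ x, 0 ≤ f x) (hmono : Monotone f)
    (hcont : Continuous f) {α : ℝ} (hα : 1 < α)
    (hgap : 2 * (2 * α - 1) * f (1 / α) < f 1) :
    ∃ x₂ x₃, 1 / α < x₃ ∧ x₃ < x₂ ∧ x₂ ≤ 1 ∧ 0 < f x₃ ∧ 2 * f x₃ < f x₂ ∧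
      (2 * α - 1) * f x₂ < f 1 := by
  have hβ : 1 < 2 * α - 1 := by linarith
  obtain ⟨t₃, hlo₃, hhi₃⟩ := exists_between
    (show f (1 / α) < f 1 / (2 * (2 * α - 1)) by rw [lt_div_iff₀ (by positivity)]; linarith)
  obtain ⟨t₂, hlo₂, hhi₂⟩ := exists_between
    (show 2 * t₃ < f 1 / (2 * α - 1) by
      rw [lt_div_iff₀ (by positivity)]; rw [lt_div_iff₀ (by positivity)] at hhi₃; linarith)
  have ht₃ : 0 < t₃ := (hf0 _).trans_lt hlo₃
  have ht₂ : t₂ ≤ f 1 := hhi₂.le.trans (div_le_self (hf0 1) hβ.le)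
  have hivt : Set.Icc (f (1 / α)) (f 1) ⊆ f '' Set.Icc (1 / α) 1 :=
    intermediate_value_Icc ((div_le_one (by linarith)).2 hα.le) hcont.continuousOn
  obtain ⟨x₃, -, rfl⟩ := hivt ⟨hlo₃.le, by linarith⟩
  obtain ⟨x₂, ⟨-, hx₂⟩, rfl⟩ := hivt ⟨by linarith, ht₂⟩
  refine ⟨x₂, x₃, hmono.reflect_lt hlo₃, hmono.reflect_lt (by linarith), hx₂, ht₃, hlo₂, ?_⟩
  rwa [lt_div_iff₀ (by positivity), mul_comm] at hhi₂

lemma exists_cycle_weights {α F₁ F₂ F₃ x₂ x₃ : ℝ} (hα : 1 < α) (hF₃ : 0 < F₃)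
    (hF₂₃ : 2 * F₃ < F₂) (hF₁₂ : (2 * α - 1) * F₂ < F₁) (hx₃ : 1 / α < x₃) (hx₃₂ : x₃ ≤ x₂)
    (hx₂ : x₂ ≤ 1) :
    ∃ φ ψ : ℝ, 0 < ψ ∧ ψ < φ ∧ ψ < 1 / 2 ∧
      F₁ / (2 * F₁ + F₂) < φ / 2 ∧
      F₂ / (F₁ + F₂) * x₂ < ψ * x₃ ∧
      φ / 2 < ψ * (F₁ / (F₁ + F₃)) ∧
      φ * (F₃ / (F₁ + F₃)) * x₃ < F₂ / (2 * F₁ + F₂) * x₂ := by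
  have hF₂ : 0 < F₂ := by linarith
  have hF₁ : 0 < F₁ := by nlinarith
  have hx₃₀ : 0 < x₃ := (one_div_pos.2 (by linarith)).trans hx₃
  have hkey : 2 * (F₂ * x₂) < x₃ * (F₁ + F₂) := by
    have hαx₃ : 1 < α * x₃ := by rwa [div_lt_iff₀' (by linarith)] at hx₃
    nlinarith
  obtain ⟨φ, hφlo, hφhi⟩ := exists_between
    (show 2 * F₁ / (2 * F₁ + F₂) < F₁ / (F₁ + F₃) by
      rw [div_lt_div_iff₀ (by positivity) (by positivity)]; nlinarith)
  have hφ : 1 / 2 < φ := by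
    refine lt_trans ?_ hφlo
    rw [lt_div_iff₀ (by positivity)]; nlinarith
  have hφ1 : φ < 1 := hφhi.trans ((div_lt_one (by positivity)).2 (by linarith))
  obtain ⟨ψ, hψlo, hψhi⟩ := exists_between
    (show max (φ * (F₁ + F₃) / (2 * F₁)) (F₂ * x₂ / (x₃ * (F₁ + F₂))) < 1 / 2 by
      refine max_lt ?_ ?_
      · rw [div_lt_iff₀ (by positivity)]
        rw [lt_div_iff₀ (by positivity)] at hφhi
        linarith
      · rw [div_lt_iff₀ (by positivity)]; linarith)
  rw [max_lt_iff, div_lt_iff₀ (by positivity), div_lt_iff₀ (by positivity)] at hψlo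
  refine ⟨φ, ψ, by nlinarith, by linarith, hψhi, ?_, ?_, ?_, ?_⟩
  · rw [div_lt_iff₀ (by positivity)] at hφlo ⊢
    linarith
  · rw [div_mul_eq_mul_div, div_lt_iff₀ (by positivity)]
    linarith
  · rw [mul_div_assoc', lt_div_iff₀ (by positivity)]
    linarith
  · calc φ * (F₃ / (F₁ + F₃)) * x₃ < 1 * (F₃ / (F₁ + F₃)) * x₃ := by gcongr
      _ ≤ F₃ / (F₁ + F₃) * x₂ := by rw [one_mul]; gcongr
      _ < F₂ / (2 * F₁ + F₂) * x₂ := by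
          have hx₂₀ : 0 < x₂ := hx₃₀.trans_le hx₃₂
          gcongr ?_ * _
          rw [div_lt_div_iff₀ (by positivity) (by positivity)]; nlinarith

def witnessQuality (x₂ x₃ : ℝ) : Fin 4 → Fin 3 → ℝ :=
  ![![1, 1, 1], ![x₂, x₃, x₃], ![1, 1, 1], ![1, 1, 1]]

def witnessCycle : Fin 7 → Fin 4 → Fin 3 :=
  ![![0, 0, 0, 1], ![1, 0, 0, 1], ![1, 2, 0, 1], ![2, 2, 0, 1], ![2, 1, 0, 1], ![0, 1, 0, 1],
    ![0, 0, 0, 1]]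

lemma witnessQuality_mem_Icc {x₂ x₃ : ℝ} (hx₃ : 0 ≤ x₃) (hx₃₂ : x₃ ≤ x₂) (hx₂ : x₂ ≤ 1)
    (j : Fin 4) (k : Fin 3) : witnessQuality x₂ x₃ j k ∈ Set.Icc 0 1 := by
  fin_cases j <;> fin_cases k <;> simp [witnessQuality] <;> constructor <;> linarith

lemma isImpPath_witnessCycle {f : ℝ → ℝ} {x₂ x₃ φ ψ : ℝ} (hf₁ : 0 < f 1) (hf₃ : 0 < f x₃)
    (hx₃ : 0 < x₃) (hψφ : ψ < φ) (hψ : ψ < 1 / 2)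
    (h₁ : f 1 / (2 * f 1 + f x₂) < φ / 2)
    (h₂ : f x₂ / (f 1 + f x₂) * x₂ < ψ * x₃)
    (h₃ : φ / 2 < ψ * (f 1 / (f 1 + f x₃)))
    (h₆ : φ * (f x₃ / (f 1 + f x₃)) * x₃ < f x₂ / (2 * f 1 + f x₂) * x₂) :
    IsImpPath (uAcScore f ![1, φ, ψ] (witnessQuality x₂ x₃)) witnessCycle := by
  -- the six moves improve by `h₁, h₂, h₃, hψφ, hψ, h₆` in turn (demand × share × quality)
  have hden : f 1 + f x₂ + f 1 = 2 * f 1 + f x₂ := by ring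
  intro r
  fin_cases r <;>
    simp only [ImpStep, ne_eq, witnessCycle, witnessQuality, uAcScore, scoreMed, Matrix.cons_val',
      Matrix.cons_val, Matrix.cons_val_succ, Fin.reduceFinMk, Fin.reduceCastSucc, Fin.reduceEq,
      Fin.forall_fin_succ, imp_false, Decidable.not_not, implies_true, and_true, true_and,
      ↓reduceIte, sum_filter, Fin.sum_univ_four, exists_eq_left', not_false_eq_true, add_zero,
      zero_add, one_mul, mul_one, hden, ← two_mul, add_comm (f x₂), add_comm (f x₃), div_self hf₁.ne',
      div_self hf₃.ne', div_mul_cancel_right₀ hf₁.ne']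
  · linarith
  · exact h₂
  · linarith
  · gcongr
  · linarith
  · exact h₆

/-- A scoring mediator `R^f` with `f` continuous, non-decreasing, nonnegative and
`f(1) > 2(2α−1)·f(1/α)` for some `α > 1` is not `u^{Ac}`-learnable: some authors
game with mediator `R^f` and action-targeted utility contains an improvement cycle. -/
theorem stmt18 (f : ℝ → ℝ) (hf0 : ∀ x, 0 ≤ f x) (hmono : Monotone f)
    (hcont : Continuous f) (α : ℝ) (hα : 1 < α)
    (hgap : 2 * (2 * α - 1) * f (1 / α) < f 1) :
    ∃ (n m l : ℕ) (D : Fin m → ℝ) (Q : Fin n → Fin m → ℝ)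
      (γ : Fin (l + 1) → Fin n → Fin m),
      0 < l ∧ (∀ k, 0 ≤ D k) ∧ (∑ k, D k = 1) ∧
      (∀ j k, Q j k ∈ Set.Icc (0:ℝ) 1) ∧
      IsImpPath (uAcScore f D Q) γ ∧ γ (Fin.last l) = γ 0 := by
  obtain ⟨x₂, x₃, hx₃, hx₃₂, hx₂, hf₃, hf₂₃, hf₁₂⟩ :=
    exists_quality_levels hf0 hmono hcont hα hgap
  obtain ⟨φ, ψ, hψ, hψφ, hψ₂, h₁, h₂, h₃, h₆⟩ :=
    exists_cycle_weights hα hf₃ hf₂₃ hf₁₂ hx₃ hx₃₂.le hx₂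
  have hx₃₀ : 0 < x₃ := (one_div_pos.2 (by linarith)).trans hx₃
  have hf₁ : 0 < f 1 := by nlinarith
  set w : Fin 3 → ℝ := ![1, φ, ψ] with hw
  have hw₀ : ∀ k, 0 ≤ w k := by
    intro k; fin_cases k <;> simp [hw] <;> linarith
  have hsum : 0 < ∑ k, w k := by
    simp [hw, Fin.sum_univ_three]; linarith
  refine ⟨4, 3, 6, (∑ k, w k)⁻¹ • w, witnessQuality x₂ x₃, witnessCycle, by norm_num,
    fun k => smul_nonneg (inv_nonneg.2 hsum.le) (hw₀ k), ?_,
    witnessQuality_mem_Icc hx₃₀.le hx₃₂.le hx₂, ?_, rfl⟩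
  · simp only [Pi.smul_apply, smul_eq_mul, ← Finset.mul_sum]
    exact inv_mul_cancel₀ hsum.ne'
  · exact (isImpPath_witnessCycle hf₁ hf₃ hx₃₀ hψφ hψ₂ h₁ h₂ h₃ h₆).smul_demand (inv_pos.2 hsum)
end
end

section
/- Consider an authors game with PRP mediator and exposure-targeted utility where the number of authors equals the number of topics (n = m), D is strictly decreasing, and the quality matrix Q has n·m pairwise distinct entries. Then the game has a unique pure Nash equilibrium, obtained greedily: topic 1 is assigned to the author of highest quality on topic 1; topic 2 to the highest-quality remaining author on topic 2; and so on until all authors and topics are matched. -/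
open Finset

noncomputable section

namespace Stmt19Aux

variable {n : ℕ} {D : Fin n → ℝ} {Q : Fin n → Fin n → ℝ}

lemma hiQ_le {k : Fin n} {a : Fin n → Fin n} {c : ℝ} (h0 : 0 ≤ c)
    (h : ∀ j, a j = k → Q j k ≤ c) : hiQ Q k a ≤ c := by
  unfold hiQ
  rw [Finset.fold_max_le]
  refine ⟨h0, fun j _ => ?_⟩
  by_cases hj : a j = k
  · simpa [hj] using h j hj
  · simpa [hj] using h0

lemma le_hiQ {k : Fin n} {a : Fin n → Fin n} {j : Fin n} (hj : a j = k) :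
    Q j k ≤ hiQ Q k a := by
  unfold hiQ
  rw [Finset.le_fold_max]
  exact Or.inr ⟨j, mem_univ j, by simp [hj]⟩

lemma hiQ_eq {k j0 : Fin n} {a : Fin n → Fin n} (h0 : a j0 = k) (hnn : 0 ≤ Q j0 k)
    (hmax : ∀ j, a j = k → Q j k ≤ Q j0 k) : hiQ Q k a = Q j0 k :=
  le_antisymm (hiQ_le hnn hmax) (le_hiQ h0)

lemma uEx_owner {a : Fin n → Fin n} {j0 k : Fin n} (hk : a j0 = k)
    (hnn : 0 ≤ Q j0 k)
    (hwin : ∀ j, a j = k → Q j k ≤ Q j0 k)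
    (huniq : ∀ j, a j = k → Q j k = Q j0 k → j = j0) :
    uEx D Q a j0 = D k := by
  subst hk
  have hh : hiQ Q (a j0) a = Q j0 (a j0) := hiQ_eq rfl hnn hwin
  have hfilter : univ.filter (fun j => a j = a j0 ∧ Q j (a j0) = hiQ Q (a j0) a) = {j0} := by
    ext j
    simp only [mem_filter, mem_univ, true_and, mem_singleton, hh]
    constructor
    · rintro ⟨h1, h2⟩; exact huniq j h1 h2
    · rintro rfl; exact ⟨rfl, rfl⟩
  have hnum : numTop Q (a j0) a = 1 := by rw [numTop, hfilter, Finset.card_singleton]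
  rw [uEx, prp, if_pos ⟨rfl, hh.symm⟩, hnum]
  norm_num

lemma uEx_le {a : Fin n → Fin n} {j : Fin n} (hD : 0 ≤ D (a j)) :
    uEx D Q a j ≤ D (a j) := by
  rw [uEx, prp]
  split
  · rename_i hc
    have hmem : j ∈ univ.filter (fun i => a i = a j ∧ Q i (a j) = hiQ Q (a j) a) :=
      mem_filter.2 ⟨mem_univ j, hc⟩
    have hpos : 1 ≤ (numTop Q (a j) a : ℝ) := by
      have := Finset.card_pos.2 ⟨j, hmem⟩
      exact_mod_cast this
    have : 1 / (numTop Q (a j) a : ℝ) ≤ 1 := by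
      rw [div_le_one (by linarith)]; linarith
    nlinarith
  · simpa using hD

lemma uEx_loser {a : Fin n → Fin n} {j : Fin n}
    (h : Q j (a j) ≠ hiQ Q (a j) a) : uEx D Q a j = 0 := by
  rw [uEx, prp, if_neg (fun hc => h hc.2), mul_zero]

end Stmt19Aux


open Stmt19Aux

/-- With `n = m`, strictly decreasing demand `D` and pairwise distinct qualities, the
PRP/exposure-targeted game has a unique pure Nash equilibrium, obtained greedily:
it is a bijective assignment in which each author beats, on her own topic, every
author assigned to a topic of lower demand. -/

theorem stmt19 {n : ℕ} (D : Fin n → ℝ) (Q : Fin n → Fin n → ℝ)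
    (hDpos : ∀ k, 0 < D k) (hDanti : StrictAnti D) (hDsum : ∑ k, D k = 1)
    (hQ : ∀ j k, Q j k ∈ Set.Icc (0:ℝ) 1)
    (hdist : Function.Injective (fun p : Fin n × Fin n => Q p.1 p.2)) :
    ∃ a : Fin n → Fin n,
      (∀ (j : Fin n) (k : Fin n),
          uEx D Q (Function.update a j k) j ≤ uEx D Q a j) ∧
      Function.Bijective a ∧
      (∀ j j' : Fin n, a j ≤ a j' → Q j' (a j) ≤ Q j (a j)) ∧
      (∀ b : Fin n → Fin n,
          (∀ (j : Fin n) (k : Fin n),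
            uEx D Q (Function.update b j k) j ≤ uEx D Q b j) → b = a) := by
  have hQ0 : ∀ j k, 0 ≤ Q j k := fun j k => (hQ j k).1
  have hQ1 : ∀ j k, Q j k ≤ 1 := fun j k => (hQ j k).2
  have hd : ∀ {j j' : Fin n} (k : Fin n), Q j k = Q j' k → j = j' := by
    intro j j' k h
    have := hdist (a₁ := (j, k)) (a₂ := (j', k)) h
    exact congrArg Prod.fst this
  -- a positive uniform gap between distinct qualities on the same topic
  obtain ⟨ε, hε0, hεgap⟩ :
      ∃ ε : ℝ, 0 < ε ∧ ∀ j j' k : Fin n, j ≠ j' → ε ≤ |Q j k - Q j' k| := by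
    classical
    set S : Finset ℝ :=
      ((univ : Finset ((Fin n × Fin n) × Fin n)).filter (fun p => p.1.1 ≠ p.1.2)).image
        (fun p => |Q p.1.1 p.2 - Q p.1.2 p.2|) with hS
    by_cases hne : S.Nonempty
    · refine ⟨S.min' hne, ?_, ?_⟩
      · have hmem := S.min'_mem hne
        obtain ⟨p, hp, hval⟩ := Finset.mem_image.1 hmem
        rw [Finset.mem_filter] at hp
        replace hp := hp.2
        rw [← hval]
        have : Q p.1.1 p.2 ≠ Q p.1.2 p.2 := fun h => hp (hd _ h)
        exact abs_pos.2 (sub_ne_zero.2 this)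
      · intro j j' k hjj'
        apply S.min'_le
        rw [hS]
        simp only [mem_image, mem_filter, mem_univ, true_and]
        exact ⟨((j, j'), k), hjj', rfl⟩
    · refine ⟨1, one_pos, ?_⟩
      intro j j' k hjj'
      exact absurd ⟨_, by simp [hS, mem_image]; exact ⟨j, j', hjj', k, rfl⟩⟩ hne
  set C : ℝ := max 1 (2 / ε) with hCdef
  have hC1 : 1 ≤ C := le_max_left _ _
  have hC0 : 0 < C := lt_of_lt_of_le one_pos hC1
  have hCε : 2 ≤ C * ε := by
    have h2 : 2 / ε ≤ C := le_max_right _ _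
    have := mul_le_mul_of_nonneg_right h2 hε0.le
    rwa [div_mul_cancel₀ 2 (ne_of_gt hε0)] at this
  set w : Fin n → ℝ := fun k => C ^ (n - (k : ℕ)) with hwdef
  have hwpos : ∀ k, 0 < w k := fun k => pow_pos hC0 _
  obtain ⟨σ, -, hσmax⟩ :=
    Finset.exists_max_image (univ : Finset (Equiv.Perm (Fin n)))
      (fun σ => ∑ k, w k * Q (σ k) k) ⟨1, mem_univ 1⟩
  -- the maximizer satisfies the greedy domination property
  have hP : ∀ k k' : Fin n, k < k' → Q (σ k') k < Q (σ k) k := by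
    intro k k' hkk'
    have hne : σ k ≠ σ k' := fun h => (ne_of_lt hkk') (σ.injective h)
    have hQne : Q (σ k') k ≠ Q (σ k) k := fun h => hne ((hd k h).symm)
    by_contra hcon
    push_neg at hcon
    have hlt : Q (σ k) k < Q (σ k') k := lt_of_le_of_ne hcon (fun h => hQne h.symm)
    set τ : Equiv.Perm (Fin n) := (Equiv.swap k k').trans σ with hτdef
    have hτk : τ k = σ k' := by simp [hτdef, Equiv.swap_apply_left]
    have hτk' : τ k' = σ k := by simp [hτdef, Equiv.swap_apply_right]
    have hτm : ∀ m, m ≠ k → m ≠ k' → τ m = σ m := fun m h1 h2 => by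
      simp [hτdef, Equiv.swap_apply_of_ne_of_ne h1 h2]
    have hkk'ne : k ≠ k' := ne_of_lt hkk'
    have hsum : ∑ m, (w m * Q (τ m) m - w m * Q (σ m) m)
        = (w k * Q (τ k) k - w k * Q (σ k) k)
          + (w k' * Q (τ k') k' - w k' * Q (σ k') k') := by
      have h := Finset.sum_subset (Finset.subset_univ ({k, k'} : Finset (Fin n)))
        (f := fun m => w m * Q (τ m) m - w m * Q (σ m) m) (fun m _ hm => by
          simp only [mem_insert, mem_singleton] at hm
          push_neg at hm
          show w m * Q (τ m) m - w m * Q (σ m) m = 0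
          rw [hτm m hm.1 hm.2]
          ring)
      rw [Finset.sum_pair hkk'ne] at h
      exact h.symm
    have hgap : ε ≤ Q (σ k') k - Q (σ k) k := by
      have := hεgap (σ k') (σ k) k hne.symm
      rwa [abs_of_pos (by linarith)] at this
    have hkn : (k : ℕ) + 1 ≤ (k' : ℕ) := hkk'
    have hk'n : (k' : ℕ) < n := k'.isLt
    have hw2 : w k' ≤ C ^ (n - (k : ℕ) - 1) := by
      apply pow_le_pow_right₀ hC1
      omega
    have hwk : w k = C * C ^ (n - (k : ℕ) - 1) := by
      rw [hwdef]
      simp only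
      rw [← pow_succ']
      congr 1
      omega
    have hCpow : 0 < C ^ (n - (k : ℕ) - 1) := pow_pos hC0 _
    have hb : -1 ≤ Q (σ k) k' - Q (σ k') k' := by
      have h1 := hQ0 (σ k) k'
      have h2 := hQ1 (σ k') k'
      linarith
    have hkey : 0 < ∑ m, (w m * Q (τ m) m - w m * Q (σ m) m) := by
      rw [hsum, hτk, hτk']
      have h1 : w k * ε ≤ w k * (Q (σ k') k - Q (σ k) k) :=
        mul_le_mul_of_nonneg_left hgap (hwpos k).le
      have h2 : w k * ε = C * ε * C ^ (n - (k : ℕ) - 1) := by rw [hwk]; ring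
      have h3 : 2 * C ^ (n - (k : ℕ) - 1) ≤ w k * ε := by
        rw [h2]
        nlinarith
      have h4 : w k' * (Q (σ k) k' - Q (σ k') k') ≥ -(w k' * 1) := by
        nlinarith [hwpos k']
      have h5 : w k' ≤ C ^ (n - (k:ℕ) - 1) := hw2
      nlinarith [hwpos k']
    rw [Finset.sum_sub_distrib] at hkey
    have := hσmax τ (mem_univ τ)
    linarith
  -- utility of every author under an injective profile
  have hUinj : ∀ (c : Fin n → Fin n), Function.Injective c →
      ∀ j, uEx D Q c j = D (c j) := by
    intro c hc j
    exact uEx_owner rfl (hQ0 _ _) (fun i hi => by rw [hc hi]) (fun i hi _ => hc hi)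
  have haP : ∀ j j' : Fin n, σ.symm j < σ.symm j' → Q j' (σ.symm j) < Q j (σ.symm j) := by
    intro j j' h
    have := hP _ _ h
    simpa using this
  have hainj : Function.Injective (fun j : Fin n => σ.symm j) := σ.symm.injective
  -- the equilibrium assignment
  refine ⟨fun j => σ.symm j, ?_, σ.symm.bijective, ?_, ?_⟩
  · -- Nash equilibrium
    intro j k
    have hcur : uEx D Q (fun i => σ.symm i) j = D (σ.symm j) := hUinj _ hainj j
    by_cases hk : k = σ.symm j
    · subst hk
      rw [show Function.update (fun i : Fin n => σ.symm i) j (σ.symm j)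
            = (fun i : Fin n => σ.symm i) from Function.update_eq_self j _]
    · set c := Function.update (fun i : Fin n => σ.symm i) j k with hcdef
      have hcj : c j = k := by simp [hcdef]
      rcases lt_or_gt_of_ne hk with hlt | hgt
      · -- deviation to a more popular topic: lose to its owner
        have hloser : uEx D Q c j = 0 := by
          apply uEx_loser
          rw [hcj]
          have hj1 : c (σ k) = k := by
            rw [hcdef, Function.update_of_ne, Equiv.symm_apply_apply]
            intro h
            exact hk (by rw [← h, Equiv.symm_apply_apply])
          have h1 : Q (σ k) k ≤ hiQ Q k c := le_hiQ hj1
          have h2 : Q j k < Q (σ k) k := by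
            have := hP k (σ.symm j) hlt
            simpa using this
          exact ne_of_lt (lt_of_lt_of_le h2 h1)
        rw [hloser, hcur]
        exact (hDpos _).le
      · -- deviation to a less popular topic
        have h1 : uEx D Q c j ≤ D (c j) := uEx_le (by rw [hcj]; exact (hDpos _).le)
        rw [hcj] at h1
        rw [hcur]
        exact le_trans h1 (hDanti hgt).le
  · -- domination property
    intro j j' hle
    rcases eq_or_lt_of_le hle with heq | hlt
    · rw [hainj heq]
    · exact (haP j j' hlt).le
  · -- uniqueness
    intro b hb
    -- b is injective
    have hbinj : Function.Injective b := by
      by_contra hni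
      rw [Function.Injective] at hni
      push_neg at hni
      obtain ⟨j, j', hbe, hjj'⟩ := hni
      -- the loser on the shared topic has utility 0
      obtain ⟨jl, j2, hbl, hlt2⟩ :
          ∃ jl j2 : Fin n, b j2 = b jl ∧ Q jl (b jl) < Q j2 (b jl) := by
        have hne2 : Q j (b j) ≠ Q j' (b j) := fun h => hjj' (hd _ h)
        rcases lt_or_gt_of_ne hne2 with h | h
        · exact ⟨j, j', hbe.symm, h⟩
        · exact ⟨j', j, hbe, by rwa [hbe] at h⟩
      have hloser : uEx D Q b jl = 0 :=
        uEx_loser (ne_of_lt (lt_of_lt_of_le hlt2 (le_hiQ hbl)))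
      -- b is not surjective, so some topic is empty
      have hns : ¬ Function.Surjective b := fun hs =>
        hjj' (Finite.injective_iff_surjective.2 hs hbe)
      rw [Function.Surjective] at hns
      push_neg at hns
      obtain ⟨k0, hk0⟩ := hns
      -- deviating to the empty topic is profitable
      set c := Function.update b jl k0 with hcdef
      have hcj : c jl = k0 := by simp [hcdef]
      have hother : ∀ i, i ≠ jl → c i = b i := fun i hi => by simp [hcdef, Function.update_of_ne hi]
      have hwin : ∀ i, c i = k0 → Q i k0 ≤ Q jl k0 := by
        intro i hi
        by_cases h : i = jl
        · subst h; exact le_refl _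
        · exact absurd (by rwa [hother i h] at hi) (hk0 i)
      have huniq : ∀ i, c i = k0 → Q i k0 = Q jl k0 → i = jl := fun i _ h => hd _ h
      have hdev : uEx D Q c jl = D k0 := uEx_owner hcj (hQ0 _ _) hwin huniq
      have := hb jl k0
      rw [← hcdef] at this
      rw [hdev, hloser] at this
      exact absurd this (not_le.2 (hDpos k0))
    have hbsurj : Function.Surjective b := Finite.injective_iff_surjective.1 hbinj
    have hbEq : ∀ j, uEx D Q b j = D (b j) := hUinj b hbinj
    -- b satisfies the strict domination property
    have hPb : ∀ j j' : Fin n, b j' < b j → Q j (b j') < Q j' (b j') := by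
      intro j j' hlt
      have hne : j ≠ j' := fun h => absurd (h ▸ hlt) (lt_irrefl _)
      by_contra hc
      push_neg at hc
      have hne2 : Q j' (b j') ≠ Q j (b j') := fun h => hne ((hd _ h).symm)
      have hlt2 : Q j' (b j') < Q j (b j') := lt_of_le_of_ne hc hne2
      set c := Function.update b j (b j') with hcdef
      have hcj : c j = b j' := by simp [hcdef]
      have hother : ∀ i, i ≠ j → c i = b i := fun i hi => by simp [hcdef, Function.update_of_ne hi]
      have hwin : ∀ i, c i = b j' → Q i (b j') ≤ Q j (b j') := by
        intro i hi
        by_cases h : i = j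
        · subst h; exact le_refl _
        · rw [hother i h] at hi
          rw [hbinj hi]
          exact hlt2.le
      have huniq : ∀ i, c i = b j' → Q i (b j') = Q j (b j') → i = j := fun i _ h => hd _ h
      have hdev : uEx D Q c j = D (b j') := uEx_owner hcj (hQ0 _ _) hwin huniq
      have hle := hb j (b j')
      rw [← hcdef, hdev, hbEq j] at hle
      exact absurd hle (not_le.2 (hDanti hlt))
    -- b and the greedy assignment coincide
    by_contra hne
    obtain ⟨j0, hj0⟩ := Function.ne_iff.1 hne
    set s : Finset (Fin n) := univ.filter (fun k => ∃ i, σ.symm i = k ∧ b i ≠ k) with hsdef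
    have hsne : s.Nonempty := ⟨σ.symm j0, by
      rw [hsdef, mem_filter]
      exact ⟨mem_univ _, j0, rfl, by simpa using hj0⟩⟩
    set k := s.min' hsne with hkdef
    obtain ⟨j, haj, hbj⟩ : ∃ i, σ.symm i = k ∧ b i ≠ k :=
      (mem_filter.1 (s.min'_mem hsne)).2
    have hforward : ∀ k'' : Fin n, k'' < k → ∀ i, σ.symm i = k'' → b i = k'' := by
      intro k'' hk'' i hi
      by_contra hbi
      have : k'' ∈ s := by rw [hsdef, mem_filter]; exact ⟨mem_univ _, i, hi, hbi⟩
      exact absurd (s.min'_le _ this) (not_le.2 hk'')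
    have hbackward : ∀ k'' : Fin n, k'' < k → ∀ i, b i = k'' → σ.symm i = k'' := by
      intro k'' hk'' i hi
      have h0 : σ.symm (σ k'') = k'' := Equiv.symm_apply_apply σ k''
      have h1 : b (σ k'') = k'' := hforward k'' hk'' (σ k'') h0
      rw [hbinj (hi.trans h1.symm)]
      exact h0
    obtain ⟨j', hbj'⟩ := hbsurj k
    have hjj' : j ≠ j' := fun h => hbj (h ▸ hbj')
    have hbjgt : k < b j := by
      rcases lt_trichotomy (b j) k with h | h | h
      · have h2 := hbackward (b j) h j rfl
        rw [haj] at h2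
        exact absurd h2 (ne_of_gt h)
      · exact absurd h hbj
      · exact h
    have hajgt : k < σ.symm j' := by
      rcases lt_trichotomy (σ.symm j') k with h | h | h
      · have h2 := hforward (σ.symm j') h j' rfl
        rw [hbj'] at h2
        exact absurd h2 (ne_of_gt h)
      · exact absurd (σ.symm.injective (h.trans haj.symm)) (Ne.symm hjj')
      · exact h
    have h1 : Q j k < Q j' k := by
      have := hPb j j' (hbj' ▸ hbjgt)
      rwa [hbj'] at this
    have h2 : Q j' k < Q j k := by
      have := haP j j' (haj ▸ hajgt)
      rwa [haj] at this
    linarith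
end
end
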